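/- In any Conway semiring S, for all a, b, c, d ∈ S the following two identities hold: (a + b·d*·c)*·b·d* = a*·b·(d + c·a*·b)* and d*·c·(a + b·d*·c)* = (d + c·a*·b)*·c·a*. (These equalities express, at the level of blocks, that the two block formulas for the star of a 2×2 block matrix over a Conway semiring agree.) -/
import Mathlib


/-- A Conway semiring: a semiring equipped with a star operation satisfying
the sum star identity `(a+b)* = a*·(b·a*)*` and
the product star identity `(a·b)* = 1 + a·(b·a)*·b`. -/
class ConwaySemiring (S : Type) extends Semiring S where
  astar : S → S
  sum_star : ∀ a b : S, astar (a + b) = astar a * astar (b * astar a)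
  prod_star : ∀ a b : S, astar (a * b) = 1 + a * astar (b * a) * b

open ConwaySemiring

lemma star_unfold_right {S : Type} [ConwaySemiring S] (p : S) :
    astar p = 1 + astar p * p := by
  have h := prod_star (1 : S) p
  simpa using h

lemma slide {S : Type} [ConwaySemiring S] (u v : S) :
    astar (u * v) * u = u * astar (v * u) := by
  have h1 : astar (u * v) * u = u + u * astar (v * u) * v * u := by
    rw [prod_star u v]; noncomm_ring
  have h2 : u * astar (v * u) = u + u * astar (v * u) * v * u := by
    conv_lhs => rw [star_unfold_right (v * u)]
    noncomm_ring
  exact h1.trans h2.symm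

lemma slide' {S : Type} [ConwaySemiring S] (u v w : S) :
    astar (u * v) * (u * w) = u * (astar (v * u) * w) := by
  rw [← mul_assoc, slide, mul_assoc]

/-- Block identities for the star of a 2×2 block matrix over a Conway semiring:
`(a + b·d*·c)*·b·d* = a*·b·(d + c·a*·b)*` and
`d*·c·(a + b·d*·c)* = (d + c·a*·b)*·c·a*`. -/
theorem statement3 (S : Type) [ConwaySemiring S] (a b c d : S) :
    astar (a + b * astar d * c) * b * astar d
      = astar a * b * astar (d + c * astar a * b) ∧
    astar d * c * astar (a + b * astar d * c)
      = astar (d + c * astar a * b) * c * astar a := by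
  constructor
  · rw [sum_star a (b * astar d * c), sum_star d (c * astar a * b)]
    simp only [mul_assoc]
    rw [slide' b (astar d * (c * astar a)) (astar d)]
    simp only [mul_assoc]
    rw [slide (astar d) (c * (astar a * b))]
    simp only [mul_assoc]
  · rw [sum_star a (b * astar d * c), sum_star d (c * astar a * b)]
    simp only [mul_assoc]
    rw [slide' c (astar a * (b * astar d)) (astar a)]
    simp only [mul_assoc]
    rw [slide (astar a) (b * (astar d * c))]
    simp only [mul_assoc]
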